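/- arXiv:1405.0782 — 3 statements merged into one kernel-verified Lean document; each statement's English description precedes it below -/
import Mathlib

section
/- Let V, Y be random variables where Y takes values in a finite set, and let p(y) = P(Y = y | V = v), q(y) = P(Y = y | V = v') be two conditional p.m.f.s. If |p(y) - q(y)| ≤ c·min{p(y), q(y)} for all y and some c ≥ 0, then D_KL(p‖q) + D_KL(q‖p) ≤ c²·∑_y min{p(y), q(y)} ≤ c². -/
private lemma pointwise (a b c : ℝ) (hc : 0 ≤ c) (ha : 0 ≤ a) (hb : 0 ≤ b)
    (h : |a - b| ≤ c * min a b) :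
    a * Real.log (a / b) + b * Real.log (b / a) ≤ c ^ 2 * min a b := by
  rcases eq_or_lt_of_le ha with ha0 | ha0
  · -- a = 0
    have hmin : min a b = 0 := le_antisymm (by rw [← ha0] at *; exact min_le_left 0 b)
      (le_min ha hb)
    have hb0 : b = 0 := by
      have := h
      rw [hmin, mul_zero, ← ha0] at this
      have := abs_nonpos_iff.mp (by linarith [abs_nonneg (0 - b)] : |(0:ℝ) - b| ≤ 0)
      linarith
    simp [← ha0, hb0]
  rcases eq_or_lt_of_le hb with hb0 | hb0
  · have hmin : min a b = 0 := le_antisymm (by rw [← hb0]; exact min_le_right a 0)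
      (le_min ha hb)
    have ha0' : a = 0 := by
      rw [hmin, mul_zero, ← hb0, sub_zero] at h
      have := abs_nonpos_iff.mp h
      linarith
    simp [ha0', ← hb0]
  -- a, b > 0
  have key : a * Real.log (a / b) + b * Real.log (b / a) = (a - b) * Real.log (a / b) := by
    rw [Real.log_div hb0.ne' ha0.ne', Real.log_div ha0.ne' hb0.ne']
    ring
  rw [key]
  have hsq : (a - b) ^ 2 ≤ c ^ 2 * min a b ^ 2 := by
    have := sq_abs (a - b) ▸ pow_le_pow_left₀ (abs_nonneg _) h 2
    calc (a - b) ^ 2 = |a - b| ^ 2 := (sq_abs _).symm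
      _ ≤ (c * min a b) ^ 2 := pow_le_pow_left₀ (abs_nonneg _) h 2
      _ = c ^ 2 * min a b ^ 2 := by ring
  rcases le_total b a with hba | hab
  · have hmin : min a b = b := min_eq_right hba
    have hlog : Real.log (a / b) ≤ a / b - 1 := Real.log_le_sub_one_of_pos (by positivity)
    have : (a - b) * Real.log (a / b) ≤ (a - b) * (a / b - 1) :=
      mul_le_mul_of_nonneg_left hlog (by linarith)
    have heq : (a - b) * (a / b - 1) = (a - b) ^ 2 / b := by
      field_simp
    rw [hmin]
    calc (a - b) * Real.log (a / b) ≤ (a - b) ^ 2 / b := by rw [← heq]; exact this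
      _ ≤ c ^ 2 * b := by
        rw [div_le_iff₀ hb0]
        calc (a - b) ^ 2 ≤ c ^ 2 * min a b ^ 2 := hsq
          _ = c ^ 2 * b * b := by rw [hmin]; ring
  · have hmin : min a b = a := min_eq_left hab
    have hlog : Real.log (b / a) ≤ b / a - 1 := Real.log_le_sub_one_of_pos (by positivity)
    have hrw : (a - b) * Real.log (a / b) = (b - a) * Real.log (b / a) := by
      rw [Real.log_div hb0.ne' ha0.ne', Real.log_div ha0.ne' hb0.ne']; ring
    have : (b - a) * Real.log (b / a) ≤ (b - a) * (b / a - 1) :=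
      mul_le_mul_of_nonneg_left hlog (by linarith)
    have heq : (b - a) * (b / a - 1) = (a - b) ^ 2 / a := by
      field_simp; ring
    rw [hmin, hrw]
    calc (b - a) * Real.log (b / a) ≤ (a - b) ^ 2 / a := by rw [← heq]; exact this
      _ ≤ c ^ 2 * a := by
        rw [div_le_iff₀ ha0]
        calc (a - b) ^ 2 ≤ c ^ 2 * min a b ^ 2 := hsq
          _ = c ^ 2 * a * a := by rw [hmin]; ring

/-- If two pmfs `p, q` on a finite set satisfy `|p(y) - q(y)| ≤ c·min{p(y), q(y)}` for all
`y`, then the symmetrized KL divergence is at most `c²·∑ min{p(y),q(y)} ≤ c²`. -/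
theorem stmt6 {𝒴 : Type*} [Fintype 𝒴] (p q : 𝒴 → ℝ) (c : ℝ) (hc : 0 ≤ c)
    (hp : ∀ y, 0 ≤ p y) (hq : ∀ y, 0 ≤ q y)
    (hps : ∑ y, p y = 1) (hqs : ∑ y, q y = 1)
    (hclose : ∀ y, |p y - q y| ≤ c * min (p y) (q y)) :
    (∑ y, p y * Real.log (p y / q y)) + (∑ y, q y * Real.log (q y / p y)) ≤
      c ^ 2 * ∑ y, min (p y) (q y) ∧
    c ^ 2 * ∑ y, min (p y) (q y) ≤ c ^ 2 := by
  constructor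
  · rw [← Finset.sum_add_distrib, Finset.mul_sum]
    exact Finset.sum_le_sum fun y _ => pointwise (p y) (q y) c hc (hp y) (hq y) (hclose y)
  · have h1 : ∑ y, min (p y) (q y) ≤ 1 := by
      rw [← hps]
      exact Finset.sum_le_sum fun y _ => min_le_left _ _
    nlinarith [sq_nonneg c]
end

section
/- Let Θ = [0,1] and suppose a single machine with n i.i.d. observations from a distribution P on [0,1] communicates a message of expected length at most B bits, from which an estimator θ̂ of the mean θ(P) = E_P[X] is formed. Then sup_P E[(θ̂ - θ(P))²] ≥ (1/8)·2^{-2(2B+2)}. In particular, with B = (1/4)·log₂ n, the risk is at least 1/(128n). -/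
/-!
Under a point mass `δ_θ` the sample is the constant vector `(θ, …, θ)`, so the budget forces
its message to have length at most `⌊B⌋` and hence to take fewer than `N = 2 ^ (⌊B⌋ + 1)`
values. Among the `N + 1` means `i / N` two then share a message, hence an estimate, so the
estimator errs by at least `1 / (2N)` at one of them.

Since `⨆` of an unbounded family of reals is `0`, the worst-case risk must also be shown to be
bounded. Testing the budget against the empirical distribution of a sample `x ∈ [0,1]ⁿ`, which
gives `x` mass at least `n ^ (-n)` under the product measure, bounds the length of every message
on the cube by `B · n ^ n`; so only finitely many estimates occur.
-/

open MeasureTheory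
open scoped ENNReal

namespace List

theorem ncard_setOf_length_eq (α : Type*) [Fintype α] (k : ℕ) :
    {l : List α | l.length = k}.ncard = Fintype.card α ^ k := by
  rw [← Nat.card_coe_set_eq,
    show Nat.card {l : List α | l.length = k} = Nat.card (List.Vector α k) from rfl,
    Nat.card_eq_fintype_card, card_vector]

theorem ncard_setOf_length_le_bool_lt (m : ℕ) :
    {l : List Bool | l.length ≤ m}.ncard < 2 ^ (m + 1) := by
  have hunion :
      {l : List Bool | l.length ≤ m} = ⋃ k ∈ Finset.range (m + 1), {l | l.length = k} := by
    ext l; simp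
  calc {l : List Bool | l.length ≤ m}.ncard
      ≤ ∑ k ∈ Finset.range (m + 1), {l : List Bool | l.length = k}.ncard := by
        rw [hunion]; exact Finset.set_ncard_biUnion_le _ _
    _ = ∑ k ∈ Finset.range (m + 1), 2 ^ k := by simp [ncard_setOf_length_eq]
    _ < 2 ^ (m + 1) := Nat.geomSum_lt le_rfl fun k hk => Finset.mem_range.1 hk

end List

theorem exists_le_abs_sub_of_mapsTo_finite {ι : Type*} {S : Set ι} (hS : S.Finite) {N : ℕ}
    (hN : S.ncard ≤ N) {c : ℝ → ι} (hc : Set.MapsTo c (Set.Icc 0 1) S) (g : ι → ℝ) :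
    ∃ θ ∈ Set.Icc (0 : ℝ) 1, 1 / (2 * N) ≤ |g (c θ) - θ| := by
  have hNpos : 0 < N :=
    ((Set.ncard_pos hS).2 ⟨_, hc (Set.left_mem_Icc.2 zero_le_one)⟩).trans_le hN
  have hNr : (0 : ℝ) < N := by exact_mod_cast hNpos
  have hgrid : ∀ i ∈ Finset.range (N + 1), (i / N : ℝ) ∈ Set.Icc (0 : ℝ) 1 := fun i hi =>
    ⟨by positivity,
      div_le_one_of_le₀ (by exact_mod_cast Finset.mem_range_succ_iff.1 hi) hNr.le⟩
  obtain ⟨i, hi, j, hj, hij, hc_eq⟩ := Set.exists_ne_map_eq_of_ncard_lt_of_maps_to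
    (s := (Finset.range (N + 1) : Set ℕ)) (f := fun i : ℕ => c (i / N))
    (by simpa [Nat.lt_succ_iff]) (fun i hi => hc (hgrid i hi)) hS
  by_contra! hclose
  have hsep : 1 / N ≤ |(i / N : ℝ) - j / N| := by
    rw [← sub_div, abs_div, abs_of_pos hNr]
    gcongr
    have : (i : ℤ) ≠ j := by exact_mod_cast hij
    exact_mod_cast Int.one_le_abs (sub_ne_zero.2 this)
  have hi' : |(i / N : ℝ) - g (c (j / N))| < 1 / (2 * N) := by
    rw [abs_sub_comm, ← hc_eq]; exact hclose _ (hgrid i hi)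
  have hj' := hclose _ (hgrid j hj)
  have htri := abs_sub_le (i / N : ℝ) (g (c (j / N))) (j / N)
  have hhalf : 1 / (2 * N : ℝ) + 1 / (2 * N) = 1 / N := by field_simp; ring
  linarith

namespace MeasureTheory

theorem Measure.pi_dirac {ι : Type*} [Fintype ι] {α : ι → Type*}
    [∀ i, MeasurableSpace (α i)] (x : ∀ i, α i) :
    Measure.pi (fun i => Measure.dirac (x i)) = Measure.dirac x := by
  rw [← Measure.infinitePi_eq_pi, Measure.infinitePi_dirac]

theorem integral_pi_dirac {ι E : Type*} [Fintype ι] [NormedAddCommGroup E] [NormedSpace ℝ E]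
    [CompleteSpace E] (F : (ι → ℝ) → E) (θ : ℝ) :
    ∫ x, F x ∂Measure.pi (fun _ : ι => Measure.dirac θ) = F fun _ => θ := by
  rw [Measure.pi_dirac, integral_dirac]

theorem ae_pi_forall_mem {ι α : Type*} [Fintype ι] [MeasurableSpace α] {P : Measure α}
    [SigmaFinite P] {s : Set α} (h : ∀ᵐ a ∂P, a ∈ s) :
    ∀ᵐ y ∂Measure.pi (fun _ : ι => P), ∀ i, y i ∈ s :=
  ae_all_iff.2 fun _ => Measure.tendsto_eval_ae_ae h

theorem measureReal_singleton_mul_le_integral {α : Type*} [MeasurableSpace α]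
    [MeasurableSingletonClass α] {μ : Measure α} {f : α → ℝ} (hf : Integrable f μ)
    (hf0 : 0 ≤ f) (x : α) : μ.real {x} * f x ≤ ∫ y, f y ∂μ := by
  rw [← smul_eq_mul, ← integral_singleton]
  exact setIntegral_le_integral hf (.of_forall hf0)

section Empirical

variable {ι α : Type*} [Fintype ι] [MeasurableSpace α]

noncomputable def empiricalMeasure (x : ι → α) : Measure α :=
  (Fintype.card ι : ℝ≥0∞)⁻¹ • ∑ i, Measure.dirac (x i)

theorem empiricalMeasure_apply_eq_one [Nonempty ι] {x : ι → α} {s : Set α}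
    (hs : ∀ i, x i ∈ s) :
    empiricalMeasure x s = 1 := by
  simp only [empiricalMeasure, Measure.smul_apply, Measure.coe_finsetSum, Finset.sum_apply,
    Measure.dirac_apply_of_mem (hs _), Finset.sum_const, Finset.card_univ, nsmul_eq_mul, mul_one,
    smul_eq_mul]
  exact ENNReal.inv_mul_cancel (by simp) (by simp)

instance [Nonempty ι] (x : ι → α) : IsProbabilityMeasure (empiricalMeasure x) :=
  ⟨empiricalMeasure_apply_eq_one fun _ => Set.mem_univ _⟩

theorem inv_card_le_empiricalMeasure_singleton [MeasurableSingletonClass α] (x : ι → α)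
    (i : ι) :
    (Fintype.card ι : ℝ≥0∞)⁻¹ ≤ empiricalMeasure x {x i} := by
  rw [empiricalMeasure, Measure.smul_apply, smul_eq_mul]
  refine le_mul_of_one_le_right' ?_
  calc (1 : ℝ≥0∞) = Measure.dirac (x i) {x i} :=
        (Measure.dirac_apply_of_mem (Set.mem_singleton _)).symm
    _ ≤ (∑ j, Measure.dirac (x j)) {x i} := by
      rw [Measure.coe_finsetSum, Finset.sum_apply]
      exact Finset.single_le_sum (f := fun j => Measure.dirac (x j) {x i}) (by simp)
        (Finset.mem_univ i)

theorem inv_card_pow_le_pi_empiricalMeasure_singleton [Nonempty ι] [MeasurableSingletonClass α]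
    (x : ι → α) :
    (Fintype.card ι : ℝ≥0∞)⁻¹ ^ Fintype.card ι ≤
      Measure.pi (fun _ : ι => empiricalMeasure x) {x} := by
  rw [← Set.univ_pi_singleton, Measure.pi_pi, ← Finset.card_univ, ← Finset.prod_const]
  exact Finset.prod_le_prod' fun i _ => inv_card_le_empiricalMeasure_singleton x i

end Empirical

theorem le_of_forall_integral_pi_le {ι α : Type*} [Fintype ι] [Nonempty ι] [MeasurableSpace α]
    [MeasurableSingletonClass α] {s : Set α} {f : (ι → α) → ℝ} (hf0 : 0 ≤ f) {B : ℝ}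
    (hB : ∀ P : Measure α, IsProbabilityMeasure P → P s = 1 →
      ∫ y, f y ∂Measure.pi (fun _ : ι => P) ≤ B)
    {x : ι → α} (hx : ∀ i, x i ∈ s) :
    f x ≤ B * Fintype.card ι ^ Fintype.card ι := by
  set μ := Measure.pi fun _ : ι => empiricalMeasure x
  have hsupp : ∀ᵐ y ∂μ, y ∈ Set.univ.pi fun _ => Set.range x := by
    have : ∀ᵐ a ∂empiricalMeasure x, a ∈ Set.range x :=
      (mem_ae_iff_prob_eq_one (Set.finite_range x).measurableSet).2
        (empiricalMeasure_apply_eq_one Set.mem_range_self)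
    filter_upwards [ae_pi_forall_mem this] with y hy using fun i _ => hy i
  have hint : Integrable f μ := by
    rw [← Measure.restrict_eq_self_of_ae_mem hsupp]
    exact IntegrableOn.of_finite (Set.Finite.pi fun _ => Set.finite_range x)
  have hatom : ((Fintype.card ι : ℝ)⁻¹) ^ Fintype.card ι ≤ μ.real {x} := by
    have := ENNReal.toReal_mono (measure_ne_top μ {x})
      (inv_card_pow_le_pi_empiricalMeasure_singleton x)
    simpa [measureReal_def] using this
  have hpos : (0 : ℝ) < ((Fintype.card ι : ℝ)⁻¹) ^ Fintype.card ι := by positivity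
  have key : ((Fintype.card ι : ℝ)⁻¹) ^ Fintype.card ι * f x ≤ B :=
    calc _ ≤ μ.real {x} * f x := mul_le_mul_of_nonneg_right hatom (hf0 x)
      _ ≤ ∫ y, f y ∂μ := measureReal_singleton_mul_le_integral hint hf0 x
      _ ≤ B := hB _ inferInstance (empiricalMeasure_apply_eq_one hx)
  rwa [← le_div_iff₀' hpos, div_eq_mul_inv, inv_pow, inv_inv] at key

theorem abs_integral_id_le_one {P : Measure ℝ} [IsProbabilityMeasure P]
    (hP : P (Set.Icc 0 1) = 1) : |∫ y, y ∂P| ≤ 1 := by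
  have hae : ∀ᵐ y ∂P, y ∈ Set.Icc (0 : ℝ) 1 :=
    (mem_ae_iff_prob_eq_one measurableSet_Icc).2 hP
  calc |∫ y, y ∂P| ≤ 1 * P.real Set.univ := norm_integral_le_of_norm_le_const (f := id) (by
        filter_upwards [hae] with y hy
        exact abs_le.2 ⟨(neg_nonpos.2 zero_le_one).trans hy.1, hy.2⟩)
    _ = 1 := by rw [probReal_univ, one_mul]

end MeasureTheory

noncomputable def meanSqError {ι : Type*} [Fintype ι] (est : (ι → ℝ) → ℝ)
    (P : Measure ℝ) : ℝ :=
  ∫ x, (est x - ∫ y, y ∂P) ^ 2 ∂Measure.pi (fun _ : ι => P)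

theorem meanSqError_dirac {ι : Type*} [Fintype ι] (est : (ι → ℝ) → ℝ) (θ : ℝ) :
    meanSqError est (Measure.dirac θ) = (est (fun _ => θ) - θ) ^ 2 := by
  rw [meanSqError, integral_pi_dirac, integral_dirac]

theorem meanSqError_le {ι : Type*} [Fintype ι] {P : Measure ℝ} [IsProbabilityMeasure P]
    (hP : P (Set.Icc 0 1) = 1) {est : (ι → ℝ) → ℝ} {C : ℝ}
    (hC : ∀ x : ι → ℝ, (∀ i, x i ∈ Set.Icc 0 1) → |est x| ≤ C) :
    meanSqError est P ≤ (C + 1) ^ 2 := by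
  have hcube : ∀ᵐ x ∂Measure.pi (fun _ : ι => P), ∀ i, x i ∈ Set.Icc (0 : ℝ) 1 :=
    ae_pi_forall_mem ((mem_ae_iff_prob_eq_one measurableSet_Icc).2 hP)
  have hmean := abs_integral_id_le_one hP
  refine le_trans (le_abs_self _) ?_
  calc |meanSqError est P| ≤ (C + 1) ^ 2 * (Measure.pi fun _ : ι => P).real Set.univ :=
      norm_integral_le_of_norm_le_const (f := fun x => (est x - ∫ y, y ∂P) ^ 2) (by
        filter_upwards [hcube] with x hx
        have := abs_le.1 ((abs_sub _ _).trans (add_le_add (hC x hx) hmean))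
        rw [Real.norm_of_nonneg (sq_nonneg _)]
        exact sq_le_sq' this.1 this.2)
    _ = (C + 1) ^ 2 := by rw [probReal_univ, mul_one]

theorem one_div_eight_mul_two_rpow_le {B : ℝ} (hB : 0 ≤ B) :
    (1 / 8 : ℝ) * 2 ^ (-(2 * (2 * B + 2))) ≤ (1 / (2 * 2 ^ (⌊B⌋₊ + 1) : ℝ)) ^ 2 := by
  have lhs : (1 / 8 : ℝ) * 2 ^ (-(2 * (2 * B + 2))) = 2 ^ (-(4 * B + 7)) := by
    rw [show -(4 * B + 7) = -3 + -(2 * (2 * B + 2)) by ring, Real.rpow_add two_pos,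
      Real.rpow_neg two_pos.le]
    norm_num
  have rhs : (1 / (2 * 2 ^ (⌊B⌋₊ + 1) : ℝ)) ^ 2 = 2 ^ (-(2 * ⌊B⌋₊ + 4 : ℝ)) := by
    rw [Real.rpow_neg two_pos.le,
      show (2 * ⌊B⌋₊ + 4 : ℝ) = ((2 * ⌊B⌋₊ + 4 : ℕ) : ℝ) by push_cast; ring,
      Real.rpow_natCast]
    field_simp
    ring
  rw [lhs, rhs]
  exact Real.rpow_le_rpow_of_exponent_le one_le_two (by linarith [Nat.floor_le hB])

theorem one_div_eight_mul_two_rpow_logb {x : ℝ} (hx : 0 < x) :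
    (1 / 8 : ℝ) * 2 ^ (-(2 * (2 * ((1 / 4) * Real.logb 2 x) + 2))) = 1 / (128 * x) := by
  rw [show -(2 * (2 * ((1 / 4) * Real.logb 2 x) + 2)) = -(Real.logb 2 x) + -4 by ring,
    Real.rpow_add two_pos, Real.rpow_neg two_pos.le, Real.rpow_logb two_pos (by norm_num) hx,
    Real.rpow_neg two_pos.le]
  norm_num
  field_simp
  ring

def ExpectedLengthLE {n : ℕ} (enc : (Fin n → ℝ) → List Bool) (B : ℝ) : Prop :=
  ∀ P : Measure ℝ, IsProbabilityMeasure P → P (Set.Icc 0 1) = 1 →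
    ∫ x, ((enc x).length : ℝ) ∂(Measure.pi fun _ : Fin n => P) ≤ B

namespace ExpectedLengthLE

variable {n : ℕ} {B : ℝ} {enc : (Fin n → ℝ) → List Bool}

theorem length_le (hn : 0 < n) (hbudget : ExpectedLengthLE enc B)
    {x : Fin n → ℝ} (hx : ∀ i, x i ∈ Set.Icc 0 1) :
    ((enc x).length : ℝ) ≤ B * n ^ n := by
  have : Nonempty (Fin n) := Fin.pos_iff_nonempty.1 hn
  simpa using le_of_forall_integral_pi_le (f := fun x => ((enc x).length : ℝ))
    (fun _ => Nat.cast_nonneg _) hbudget hx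

theorem length_const_le_floor (hbudget : ExpectedLengthLE enc B)
    {θ : ℝ} (hθ : θ ∈ Set.Icc 0 1) : (enc fun _ => θ).length ≤ ⌊B⌋₊ := by
  have h := hbudget (Measure.dirac θ) inferInstance (Measure.dirac_apply_of_mem hθ)
  rw [integral_pi_dirac] at h
  exact Nat.le_floor h

theorem bddAbove_meanSqError (hn : 0 < n) (hbudget : ExpectedLengthLE enc B)
    (θhat : List Bool → ℝ) :
    BddAbove (Set.range
      fun P : {P : Measure ℝ // IsProbabilityMeasure P ∧ P (Set.Icc 0 1) = 1} =>
        meanSqError (fun x => θhat (enc x)) P.1) := by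
  obtain ⟨C, hC⟩ :=
    ((List.finite_length_le Bool ⌊B * n ^ n⌋₊).image fun l => |θhat l|).bddAbove
  refine ⟨(C + 1) ^ 2, ?_⟩
  rintro _ ⟨⟨P, hP, hP01⟩, rfl⟩
  exact meanSqError_le hP01 fun x hx =>
    hC ⟨enc x, Nat.le_floor (hbudget.length_le hn hx), rfl⟩

theorem le_iSup_meanSqError (hn : 0 < n) (hB : 0 ≤ B)
    (hbudget : ExpectedLengthLE enc B) (θhat : List Bool → ℝ) :
    (1 / 8 : ℝ) * 2 ^ (-(2 * (2 * B + 2))) ≤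
      ⨆ P : {P : Measure ℝ // IsProbabilityMeasure P ∧ P (Set.Icc 0 1) = 1},
        meanSqError (fun x => θhat (enc x)) P.1 := by
  obtain ⟨θ, hθ, herr⟩ := exists_le_abs_sub_of_mapsTo_finite
    (List.finite_length_le Bool ⌊B⌋₊) (List.ncard_setOf_length_le_bool_lt _).le
    (c := fun θ => enc fun _ => θ) (fun _ hθ => hbudget.length_const_le_floor hθ) θhat
  refine le_ciSup_of_le (hbudget.bddAbove_meanSqError hn θhat)
    ⟨Measure.dirac θ, inferInstance, Measure.dirac_apply_of_mem hθ⟩ ?_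
  rw [meanSqError_dirac]
  calc _ ≤ (1 / (2 * 2 ^ (⌊B⌋₊ + 1) : ℝ)) ^ 2 := one_div_eight_mul_two_rpow_le hB
    _ ≤ |θhat (enc fun _ => θ) - θ| ^ 2 :=
      pow_le_pow_left₀ (by positivity) (by exact_mod_cast herr) 2
    _ = _ := sq_abs _

end ExpectedLengthLE

theorem stmt7_general {n : ℕ} (hn : 0 < n) (B : ℝ) (hB : 0 ≤ B)
    (enc : (Fin n → ℝ) → List Bool) (θhat : List Bool → ℝ)
    (hbudget : ∀ P : Measure ℝ, IsProbabilityMeasure P → P (Set.Icc 0 1) = 1 →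
      ∫ x, ((enc x).length : ℝ) ∂(Measure.pi fun _ : Fin n => P) ≤ B) :
    (1 / 8 : ℝ) * (2 : ℝ) ^ (-(2 * (2 * B + 2))) ≤
      (⨆ P : {P : Measure ℝ // IsProbabilityMeasure P ∧ P (Set.Icc 0 1) = 1},
        ∫ x, (θhat (enc x) - ∫ y, y ∂P.1) ^ 2 ∂(Measure.pi fun _ : Fin n => P.1)) ∧
    (B = (1 / 4) * Real.logb 2 n →
      1 / (128 * n) ≤
        ⨆ P : {P : Measure ℝ // IsProbabilityMeasure P ∧ P (Set.Icc 0 1) = 1},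
          ∫ x, (θhat (enc x) - ∫ y, y ∂P.1) ^ 2 ∂(Measure.pi fun _ : Fin n => P.1)) := by
  have h := ExpectedLengthLE.le_iSup_meanSqError hn hB hbudget θhat
  refine ⟨h, fun hBn => ?_⟩
  rwa [hBn, one_div_eight_mul_two_rpow_logb (by exact_mod_cast hn)] at h

/-- Bounded mean estimation with one machine: if a message of expected length at most `B`
bits is sent about `n` i.i.d. observations from any distribution `P` on `[0,1]`, then the
worst-case risk of estimating the mean is at least `(1/8)·2^{-2(2B+2)}`; in particular,
with `B = (1/4)·log₂ n`, the risk is at least `1/(128n)`. -/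
theorem stmt7 {n : ℕ} (hn : 0 < n) (B : ℝ) (hB : 0 ≤ B)
    (enc : (Fin n → ℝ) → List Bool) (θhat : List Bool → ℝ)
    (hlen : Measurable fun x => ((enc x).length : ℝ))
    (hest : Measurable fun x => θhat (enc x))
    (hbudget : ∀ P : Measure ℝ, IsProbabilityMeasure P → P (Set.Icc 0 1) = 1 →
      ∫ x, ((enc x).length : ℝ) ∂(Measure.pi fun _ : Fin n => P) ≤ B) :
    (1 / 8 : ℝ) * (2 : ℝ) ^ (-(2 * (2 * B + 2))) ≤
      (⨆ P : {P : Measure ℝ // IsProbabilityMeasure P ∧ P (Set.Icc 0 1) = 1},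
        ∫ x, (θhat (enc x) - ∫ y, y ∂P.1) ^ 2 ∂(Measure.pi fun _ : Fin n => P.1)) ∧
    (B = (1 / 4) * Real.logb 2 n →
      1 / (128 * n) ≤
        ⨆ P : {P : Measure ℝ // IsProbabilityMeasure P ∧ P (Set.Icc 0 1) = 1},
          ∫ x, (θhat (enc x) - ∫ y, y ∂P.1) ^ 2 ∂(Measure.pi fun _ : Fin n => P.1)) :=
  stmt7_general hn B hB enc θhat hbudget
end

section
/- Let V → X → Y be a Markov chain where V is uniform on {-1,1}^d with independent coordinates, X ∈ {-1,1}^d has independent coordinates with P(X_j = V_j | V) = (1+δ)/2, and Y is any discrete random variable depending only on X. If α = log((1+δ)/(1-δ)), then I(V; Y) ≤ 2·(e^{2α} - 1)²·I(X; Y). -/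
/-!
Write `klDivUnif f = ∑ b, f b * log (f b / mean f)` for the divergence of a mass distribution
`f` from the uniform one of the same total mass. Since `V` and `X` are uniform,
`I(V; Y) = ∑_y klDivUnif P(V = ·, Y = y)` and `I(X; Y) = ∑_y klDivUnif P(X = ·, Y = y)`, and by
the Markov property `P(V = ·, Y = y)` is `P(X = ·, Y = y)` pushed through the `d`-fold binary
symmetric channel. This channel contracts `klDivUnif` by the factor `4 δ² ≤ 2 (e^{2α} - 1)²`:
for one bit this is `t² / 2 ≤ (1 + t) log (1 + t) + (1 - t) log (1 - t) ≤ 2 t²`, and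
contraction tensorizes by the chain rule of `klDivUnif` over products together with its
convexity (concavity of the binary entropy).

The events in the hypotheses need not be measurable; the law of total probability still holds
for them because the fibres of a random variable whose probabilities add up to one are
null-measurable.
-/

open MeasureTheory ProbabilityTheory

/-- The probability of an event, as a real number. -/
noncomputable def pr {Ω : Type*} [MeasurableSpace Ω] (μ : Measure Ω) (s : Set Ω) : ℝ :=
  (μ s).toReal

/-- Mutual information (in nats) between two finitely-valued random variables. -/
noncomputable def mutualInfo {Ω A B : Type*} [MeasurableSpace Ω] [Fintype A] [Fintype B]
    (μ : Measure Ω) (U : Ω → A) (W : Ω → B) : ℝ :=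
  ∑ a : A, ∑ b : B, pr μ {ω | U ω = a ∧ W ω = b} *
    Real.log (pr μ {ω | U ω = a ∧ W ω = b} /
      (pr μ {ω | U ω = a} * pr μ {ω | W ω = b}))

/-- Shannon entropy (in nats) of a finitely-valued random variable. -/
noncomputable def entropy {Ω A : Type*} [MeasurableSpace Ω] [Fintype A]
    (μ : Measure Ω) (U : Ω → A) : ℝ :=
  -∑ a : A, pr μ {ω | U ω = a} * Real.log (pr μ {ω | U ω = a})

/-- Conditional mutual information `I(U; W | Z)` for finitely-valued random variables. -/
noncomputable def condMutualInfo {Ω A B C : Type*} [MeasurableSpace Ω]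
    [Fintype A] [Fintype B] [Fintype C]
    (μ : Measure Ω) (U : Ω → A) (W : Ω → B) (Z : Ω → C) : ℝ :=
  ∑ c : C, pr μ {ω | Z ω = c} * mutualInfo (μ[|{ω | Z ω = c}]) U W

open Real Finset Matrix

lemma mul_log_le_mul_sub_one {u : ℝ} (hu : 0 ≤ u) : u * log u ≤ u * (u - 1) := by
  rcases hu.eq_or_lt with rfl | hu
  · simp
  · exact mul_le_mul_of_nonneg_left (log_le_sub_one_of_pos hu) hu.le

lemma two_mul_sub_two_mul_sqrt_le_mul_log {u : ℝ} (hu : 0 ≤ u) :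
    2 * u - 2 * √u ≤ u * log u := by
  rcases hu.eq_or_lt with rfl | hu
  · simp
  have hr : 0 < √u := sqrt_pos.2 hu
  have := mul_le_mul_of_nonneg_left (one_sub_inv_le_log_of_pos hr) (by positivity : 0 ≤ 2 * u)
  rw [log_sqrt hu.le, mul_sub, mul_one, ← div_eq_mul_inv, mul_div_assoc, div_sqrt] at this
  linarith

lemma mul_log_add_mul_log_le_two_mul_sq {t : ℝ} (ht : |t| ≤ 1) :
    (1 + t) * log (1 + t) + (1 - t) * log (1 - t) ≤ 2 * t ^ 2 := by
  obtain ⟨h₀, h₁⟩ := abs_le.1 ht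
  nlinarith [mul_log_le_mul_sub_one (by linarith : 0 ≤ 1 + t),
    mul_log_le_mul_sub_one (by linarith : 0 ≤ 1 - t)]

lemma sq_div_two_le_mul_log_add_mul_log {t : ℝ} (ht : |t| ≤ 1) :
    t ^ 2 / 2 ≤ (1 + t) * log (1 + t) + (1 - t) * log (1 - t) := by
  obtain ⟨h₀, h₁⟩ := abs_le.1 ht
  have ha := two_mul_sub_two_mul_sqrt_le_mul_log (by linarith : 0 ≤ 1 + t)
  have hb := two_mul_sub_two_mul_sqrt_le_mul_log (by linarith : 0 ≤ 1 - t)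
  have ha2 := sq_sqrt (by linarith : 0 ≤ 1 + t)
  have hb2 := sq_sqrt (by linarith : 0 ≤ 1 - t)
  set a := √(1 + t)
  set b := √(1 - t)
  have : t = (a ^ 2 - b ^ 2) / 2 := by linarith
  -- `8 - 4s - (a² - b²)²/4 = (s - 2)² (s² + 4s + 8)/4` for `s = a + b`, using `a² + b² = 2`
  nlinarith [mul_nonneg (sq_nonneg (a + b - 2))
    (by positivity : 0 ≤ (a + b) ^ 2 + 4 * (a + b) + 8)]

lemma negMulLog_add_negMulLog_sub_negMulLog_add (x y : ℝ) :
    negMulLog x + negMulLog y - negMulLog (x + y) = (x + y) * binEntropy (x / (x + y)) := by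
  rcases eq_or_ne (x + y) 0 with h | h
  · obtain rfl : y = -x := by linarith
    simp [negMulLog, Real.log_neg_eq_log]
  · set s := x + y
    set p := x / s
    have hx : x = s * p := (mul_div_cancel₀ x h).symm
    have hy : y = s * (1 - p) := by rw [mul_one_sub, ← hx]; ring
    calc negMulLog x + negMulLog y - negMulLog s
        = negMulLog (s * p) + negMulLog (s * (1 - p)) - negMulLog s := by rw [← hx, ← hy]
      _ = s * binEntropy p := by
        rw [negMulLog_mul, negMulLog_mul, binEntropy_eq_negMulLog_add_negMulLog_one_sub]; ring

section KlDivUnif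

variable {A B : Type*} [Fintype A] [Fintype B]

/-- The `negMulLog` form keeps the algebra of `klDivUnif` free of positivity side conditions;
`klDivUnif_eq_sum_mul_log` gives the usual form. -/
noncomputable def klDivUnif (f : B → ℝ) : ℝ :=
  (∑ b, f b) * log (Fintype.card B) + negMulLog (∑ b, f b) - ∑ b, negMulLog (f b)

lemma klDivUnif_mul (t : ℝ) (f : B → ℝ) :
    klDivUnif (fun b => t * f b) = t * klDivUnif f := by
  simp only [klDivUnif, negMulLog_mul, ← mul_sum, sum_add_distrib, ← sum_mul]
  ring

lemma sum_mul_binEntropy_div_le {f g : B → ℝ} (hf : ∀ b, 0 ≤ f b) (hg : ∀ b, 0 ≤ g b) :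
    ∑ b, (f b + g b) * binEntropy (f b / (f b + g b)) ≤
      (∑ b, f b + ∑ b, g b) * binEntropy ((∑ b, f b) / (∑ b, f b + ∑ b, g b)) := by
  have hfg : ∀ b, 0 ≤ f b + g b := fun b => add_nonneg (hf b) (hg b)
  rw [← sum_add_distrib]
  generalize hS : ∑ b, (f b + g b) = S
  rcases (hS ▸ sum_nonneg fun b _ => hfg b : 0 ≤ S).eq_or_lt with rfl | hS₀
  · have h0 : ∀ b, f b + g b = 0 := fun b =>
      (sum_eq_zero_iff_of_nonneg fun b _ => hfg b).1 hS b (mem_univ b)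
    simp [h0]
  have hw : ∑ b, (f b + g b) / S = 1 := by rw [← sum_div, hS, div_self hS₀.ne']
  have hp : ∀ b, f b / (f b + g b) ∈ Set.Icc (0 : ℝ) 1 := fun b =>
    ⟨div_nonneg (hf b) (hfg b), div_le_one_of_le₀ (le_add_of_nonneg_right (hg b)) (hfg b)⟩
  have hwp : ∀ b, ((f b + g b) / S) • (f b / (f b + g b)) = f b / S := by
    intro b
    rcases (hfg b).eq_or_lt with h | h
    · have : f b = 0 := by linarith [hf b, hg b]
      simp [this]
    · rw [smul_eq_mul]; field_simp
  have := strictConcave_binEntropy.concaveOn.le_map_sum (t := univ)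
    (fun b _ => div_nonneg (hfg b) hS₀.le) hw fun b _ => hp b
  rw [sum_congr rfl fun b _ => hwp b, ← sum_div] at this
  rw [← div_le_iff₀' hS₀, sum_div]
  simpa only [smul_eq_mul, mul_div_right_comm] using this

lemma klDivUnif_add_le {f g : B → ℝ} (hf : ∀ b, 0 ≤ f b) (hg : ∀ b, 0 ≤ g b) :
    klDivUnif (fun b => f b + g b) ≤ klDivUnif f + klDivUnif g := by
  have := sum_mul_binEntropy_div_le hf hg
  simp only [← negMulLog_add_negMulLog_sub_negMulLog_add] at this
  simp only [klDivUnif, sum_add_distrib, sum_sub_distrib] at this ⊢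
  linarith

lemma klDivUnif_sum_le {ι : Type*} (s : Finset ι) {w : ι → ℝ} {f : ι → B → ℝ}
    (hw : ∀ i, 0 ≤ w i) (hf : ∀ i b, 0 ≤ f i b) :
    klDivUnif (fun b => ∑ i ∈ s, w i * f i b) ≤ ∑ i ∈ s, w i * klDivUnif (f i) := by
  classical
  induction s using Finset.induction_on with
  | empty => simp [klDivUnif]
  | insert i s hi ih =>
    simp only [sum_insert hi]
    grw [klDivUnif_add_le (fun b => mul_nonneg (hw i) (hf i b))
      (fun b => sum_nonneg fun j _ => mul_nonneg (hw j) (hf j b)), klDivUnif_mul, ih]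

lemma klDivUnif_comp_equiv (e : A ≃ B) (f : B → ℝ) : klDivUnif (f ∘ e) = klDivUnif f := by
  simp only [klDivUnif, Function.comp_apply, Equiv.sum_comp e (fun b => negMulLog (f b)),
    Equiv.sum_comp e f, Fintype.card_congr e]

lemma klDivUnif_of_unique [Unique B] (f : B → ℝ) : klDivUnif f = 0 := by
  simp [klDivUnif]

lemma klDivUnif_prod [Nonempty A] [Nonempty B] (f : A × B → ℝ) :
    klDivUnif f = klDivUnif (fun a => ∑ b, f (a, b)) + ∑ a, klDivUnif (fun b => f (a, b)) := by
  have hA : (Fintype.card A : ℝ) ≠ 0 := Nat.cast_ne_zero.2 Fintype.card_ne_zero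
  have hB : (Fintype.card B : ℝ) ≠ 0 := Nat.cast_ne_zero.2 Fintype.card_ne_zero
  simp only [klDivUnif, Fintype.sum_prod_type, Fintype.card_prod, Nat.cast_mul, log_mul hA hB,
    sum_add_distrib, sum_sub_distrib, ← sum_mul]
  ring

lemma klDivUnif_eq_sum_mul_log {f : B → ℝ} (hf : ∀ b, 0 ≤ f b) :
    klDivUnif f = ∑ b, f b * log (f b / ((Fintype.card B : ℝ)⁻¹ * ∑ b, f b)) := by
  rcases (sum_nonneg fun b _ => hf b : 0 ≤ ∑ b, f b).eq_or_lt with hS | hS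
  · have h0 : ∀ b, f b = 0 := fun b =>
      (sum_eq_zero_iff_of_nonneg fun b _ => hf b).1 hS.symm b (mem_univ b)
    simp [klDivUnif, h0]
  have : Nonempty B := by
    by_contra h
    simp [not_nonempty_iff.1 h] at hS
  have hB : (0 : ℝ) < Fintype.card B := Nat.cast_pos.2 Fintype.card_pos
  have hterm : ∀ b, f b * log (f b / ((Fintype.card B : ℝ)⁻¹ * ∑ b, f b)) =
      -negMulLog (f b) + f b * (log (Fintype.card B) - log (∑ b, f b)) := by
    intro b
    rcases (hf b).eq_or_lt with h | h
    · simp [← h]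
    · rw [log_div h.ne' (by positivity), log_mul (by positivity) hS.ne', log_inv, negMulLog]
      ring
  simp only [hterm, sum_add_distrib, ← sum_mul, sum_neg_distrib, klDivUnif, negMulLog]
  ring

lemma klDivUnif_bool {p : Bool → ℝ} {s t : ℝ} (h₁ : p true = s * (1 + t) / 2)
    (h₀ : p false = s * (1 - t) / 2) :
    klDivUnif p = s / 2 * ((1 + t) * log (1 + t) + (1 - t) * log (1 - t)) := by
  have hsum : ∑ b, p b = s := by rw [Fintype.sum_bool, h₁, h₀]; ring
  have hhalf (u : ℝ) : negMulLog (s * u / 2) = u / 2 * negMulLog s + s / 2 * negMulLog u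
      + s * u / 2 * log 2 := by
    rw [mul_div_assoc, negMulLog_mul, div_eq_mul_inv u, negMulLog_mul]
    simp only [negMulLog, log_inv]
    ring
  rw [klDivUnif, hsum, Fintype.sum_bool, h₁, h₀, hhalf, hhalf]
  simp only [negMulLog, Fintype.card_bool, Nat.cast_ofNat]
  ring

def ContractsKlDivUnif (K : Matrix A A ℝ) (c : ℝ) : Prop :=
  ∀ p : A → ℝ, (∀ a, 0 ≤ p a) → klDivUnif (p ᵥ* K) ≤ c * klDivUnif p

noncomputable def bsc (δ : ℝ) : Matrix Bool Bool ℝ :=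
  fun a b => if a = b then (1 + δ) / 2 else (1 - δ) / 2

lemma exists_bool_eq_mul_div_two {p : Bool → ℝ} (hp : ∀ b, 0 ≤ p b) :
    ∃ s t, 0 ≤ s ∧ |t| ≤ 1 ∧ p true = s * (1 + t) / 2 ∧ p false = s * (1 - t) / 2 := by
  have h₁ := hp true
  have h₀ := hp false
  rcases (add_nonneg h₁ h₀).eq_or_lt with h | h
  · exact ⟨0, 0, le_rfl, by simp, by linarith, by linarith⟩
  refine ⟨p true + p false, (p true - p false) / (p true + p false), h.le, ?_, ?_, ?_⟩
  · rw [abs_div, abs_of_pos h]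
    exact div_le_one_of_le₀ (abs_sub_le_iff.2 ⟨by linarith, by linarith⟩) h.le
  all_goals field_simp; ring

lemma contractsKlDivUnif_bsc {δ c : ℝ} (hδ : |δ| ≤ 1) (hc : 4 * δ ^ 2 ≤ c) :
    ContractsKlDivUnif (bsc δ) c := by
  intro p hp
  obtain ⟨s, t, hs, ht, h₁, h₀⟩ := exists_bool_eq_mul_div_two hp
  have hq₁ : (p ᵥ* bsc δ) true = s * (1 + δ * t) / 2 := by
    simp only [vecMul, dotProduct, Fintype.sum_bool, bsc, if_true, if_false, Bool.false_eq_true,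
      h₁, h₀]
    ring
  have hq₀ : (p ᵥ* bsc δ) false = s * (1 - δ * t) / 2 := by
    simp only [vecMul, dotProduct, Fintype.sum_bool, bsc, if_true, if_false, Bool.true_eq_false,
      h₁, h₀]
    ring
  have hδt : |δ * t| ≤ 1 := by rw [abs_mul]; exact mul_le_one₀ hδ (abs_nonneg t) ht
  rw [klDivUnif_bool hq₁ hq₀, klDivUnif_bool h₁ h₀, mul_left_comm]
  refine mul_le_mul_of_nonneg_left ?_ (by positivity)
  calc (1 + δ * t) * log (1 + δ * t) + (1 - δ * t) * log (1 - δ * t)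
      ≤ 2 * (δ * t) ^ 2 := mul_log_add_mul_log_le_two_mul_sq hδt
    _ = 4 * δ ^ 2 * (t ^ 2 / 2) := by ring
    _ ≤ c * ((1 + t) * log (1 + t) + (1 - t) * log (1 - t)) :=
      mul_le_mul hc (sq_div_two_le_mul_log_add_mul_log ht) (by positivity)
        ((by positivity : (0 : ℝ) ≤ 4 * δ ^ 2).trans hc)

lemma ContractsKlDivUnif.submatrix {A' : Type*} [Fintype A'] {K : Matrix A A ℝ} {c : ℝ}
    (hK : ContractsKlDivUnif K c) (e : A' ≃ A) : ContractsKlDivUnif (K.submatrix e e) c := by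
  intro p hp
  rw [submatrix_vecMul_equiv, klDivUnif_comp_equiv, ← klDivUnif_comp_equiv e.symm p]
  exact hK _ fun a => hp _

lemma sum_vecMul_of_mem_rowStochastic [DecidableEq A] {K : Matrix A A ℝ}
    (hK : K ∈ rowStochastic ℝ A) (p : A → ℝ) : ∑ a, (p ᵥ* K) a = ∑ a, p a := by
  simpa [dotProduct, one_vecMul_of_mem_rowStochastic hK] using (dotProduct_mulVec p K 1).symm

lemma ContractsKlDivUnif.kronecker [Nonempty A] [Nonempty B] [DecidableEq A] [DecidableEq B]
    {M : Matrix A A ℝ} {N : Matrix B B ℝ} {c : ℝ} (hM : M ∈ rowStochastic ℝ A)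
    (hN : N ∈ rowStochastic ℝ B) (hMc : ContractsKlDivUnif M c)
    (hNc : ContractsKlDivUnif N c) : ContractsKlDivUnif (Matrix.kronecker M N) c := by
  intro p hp
  have hslice : ∀ a' b', (p ᵥ* (Matrix.kronecker M N)) (a', b') =
      ∑ a, M a a' * ((fun b => p (a, b)) ᵥ* N) b' := by
    intro a' b'
    simp only [vecMul, dotProduct, Fintype.sum_prod_type, Matrix.kronecker, kroneckerMap_apply,
      mul_sum]
    exact sum_congr rfl fun a _ => sum_congr rfl fun b _ => by ring
  have hmarg : (fun a' => ∑ b', (p ᵥ* (Matrix.kronecker M N)) (a', b')) =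
      (fun a => ∑ b, p (a, b)) ᵥ* M := by
    ext a'
    simp only [hslice, sum_comm (γ := B), ← mul_sum, sum_vecMul_of_mem_rowStochastic hN]
    simp only [vecMul, dotProduct, mul_comm]
  have hNp : ∀ a b, 0 ≤ ((fun b => p (a, b)) ᵥ* N) b :=
    fun a => nonneg_vecMul_of_mem_rowStochastic hN fun b => hp (a, b)
  calc klDivUnif (p ᵥ* (Matrix.kronecker M N))
      = klDivUnif ((fun a => ∑ b, p (a, b)) ᵥ* M) +
          ∑ a', klDivUnif (fun b' => (p ᵥ* (Matrix.kronecker M N)) (a', b')) := by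
        rw [klDivUnif_prod, hmarg]
    _ ≤ c * klDivUnif (fun a => ∑ b, p (a, b)) +
          ∑ a', ∑ a, M a a' * (c * klDivUnif (fun b => p (a, b))) := by
        gcongr with a' _
        · exact hMc _ fun a => sum_nonneg fun b _ => hp (a, b)
        · simp only [hslice]
          refine (klDivUnif_sum_le _ (fun a => nonneg_of_mem_rowStochastic hM) hNp).trans ?_
          gcongr with a _
          · exact nonneg_of_mem_rowStochastic hM
          · exact hNc _ fun b => hp (a, b)
    _ = c * klDivUnif p := by
        rw [sum_comm, klDivUnif_prod p]
        simp only [← sum_mul, sum_row_of_mem_rowStochastic hM, one_mul, mul_add, mul_sum]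

noncomputable def bscPow (δ : ℝ) (d : ℕ) : Matrix (Fin d → Bool) (Fin d → Bool) ℝ :=
  fun x v => ∏ j, bsc δ (x j) (v j)

lemma bsc_mem_rowStochastic {δ : ℝ} (hδ : |δ| ≤ 1) : bsc δ ∈ rowStochastic ℝ Bool := by
  obtain ⟨h₀, h₁⟩ := abs_le.1 hδ
  refine mem_rowStochastic_iff_sum.2 ⟨fun a b => ?_, fun a => ?_⟩
  · unfold bsc; split_ifs <;> linarith
  · cases a <;> simp [bsc] <;> ring

lemma bscPow_mem_rowStochastic {δ : ℝ} (hδ : |δ| ≤ 1) (d : ℕ) :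
    bscPow δ d ∈ rowStochastic ℝ (Fin d → Bool) := by
  have hbsc := bsc_mem_rowStochastic hδ
  refine mem_rowStochastic_iff_sum.2 ⟨fun x v => ?_, fun x => ?_⟩
  · exact prod_nonneg fun j _ => nonneg_of_mem_rowStochastic hbsc
  · simp only [bscPow, ← Fintype.prod_sum, sum_row_of_mem_rowStochastic hbsc, prod_const_one]

lemma bscPow_succ (δ : ℝ) (d : ℕ) :
    bscPow δ (d + 1) = (Matrix.kronecker (bsc δ) (bscPow δ d)).submatrix
      (Fin.consEquiv fun _ => Bool).symm (Fin.consEquiv fun _ => Bool).symm := by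
  ext x v
  simp [bscPow, Fin.prod_univ_succ, Fin.consEquiv, Fin.tail]

lemma contractsKlDivUnif_bscPow {δ c : ℝ} (hδ : |δ| ≤ 1) (hc : 4 * δ ^ 2 ≤ c) (d : ℕ) :
    ContractsKlDivUnif (bscPow δ d) c := by
  induction d with
  | zero => intro p _; simp [klDivUnif_of_unique]
  | succ d ih =>
    rw [bscPow_succ]
    exact ((contractsKlDivUnif_bsc hδ hc).kronecker (bsc_mem_rowStochastic hδ)
      (bscPow_mem_rowStochastic hδ d) ih).submatrix _

end KlDivUnif

section TotalProbability

variable {Ω ι : Type*} [MeasurableSpace Ω] {μ : Measure Ω}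

lemma nullMeasurableSet_of_measure_add_measure_compl_le [IsFiniteMeasure μ] {s : Set Ω}
    (h : μ s + μ sᶜ ≤ μ Set.univ) : NullMeasurableSet s μ := by
  set t := toMeasurable μ s
  have ht : MeasurableSet t := measurableSet_toMeasurable μ s
  have hst : s ⊆ t := subset_toMeasurable μ s
  have hsplit : μ (t \ s) + μ tᶜ = μ sᶜ := by
    rw [← measure_inter_add_sdiff sᶜ ht, Set.sdiff_eq_compl_inter, Set.inter_comm,
      Set.sdiff_eq_compl_inter, Set.inter_eq_left.2 (Set.compl_subset_compl.2 hst)]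
  rw [← measure_add_measure_compl ht, measure_toMeasurable, ← hsplit, add_left_comm] at h
  have hnull : μ (t \ s) = 0 := nonpos_iff_eq_zero.1 <|
    ENNReal.le_of_add_le_add_right (by finiteness) (h.trans_eq (zero_add _).symm)
  exact ht.nullMeasurableSet.congr (ae_eq_set.2 ⟨hnull, by simp [Set.sdiff_eq_empty.2 hst]⟩)

variable [Fintype ι]

lemma nullMeasurableSet_fiber [IsFiniteMeasure μ] {Z : Ω → ι}
    (hZ : ∑ i, μ (Z ⁻¹' {i}) = μ Set.univ) (i : ι) :
    NullMeasurableSet (Z ⁻¹' {i}) μ := by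
  classical
  refine nullMeasurableSet_of_measure_add_measure_compl_le ?_
  have hcompl : (Z ⁻¹' {i})ᶜ ⊆ ⋃ j ∈ univ.erase i, Z ⁻¹' {j} := fun ω hω =>
    Set.mem_biUnion (mem_erase.2 ⟨hω, mem_univ _⟩) rfl
  calc μ (Z ⁻¹' {i}) + μ (Z ⁻¹' {i})ᶜ
      ≤ μ (Z ⁻¹' {i}) + ∑ j ∈ univ.erase i, μ (Z ⁻¹' {j}) :=
        add_le_add le_rfl ((measure_mono hcompl).trans (measure_biUnion_finset_le _ _))
    _ = μ Set.univ := by rw [add_sum_erase univ (fun j => μ (Z ⁻¹' {j})) (mem_univ i), hZ]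

lemma measure_eq_sum_measure_inter_fiber [IsFiniteMeasure μ] {Z : Ω → ι}
    (hZ : ∑ i, μ (Z ⁻¹' {i}) = μ Set.univ) (t : Set Ω) :
    μ t = ∑ i, μ (t ∩ Z ⁻¹' {i}) := by
  have hunion : ⋃ i, Z ⁻¹' {i} = Set.univ := Set.iUnion_eq_univ_iff.2 fun ω => ⟨Z ω, rfl⟩
  calc μ t = μ.restrict (⋃ i, Z ⁻¹' {i}) t := by rw [hunion, Measure.restrict_univ]
    _ = ∑ i, μ.restrict (Z ⁻¹' {i}) t := by
      rw [Measure.restrict_iUnion_ae (fun i j hij => (pairwise_disjoint_fiber Z hij).aedisjoint)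
        (nullMeasurableSet_fiber hZ), Measure.sum_apply_of_countable, tsum_fintype]
    _ = ∑ i, μ (t ∩ Z ⁻¹' {i}) :=
      sum_congr rfl fun i _ => Measure.restrict_apply₀' (nullMeasurableSet_fiber hZ i)

lemma pr_eq_sum_pr_inter [IsProbabilityMeasure μ] {Z : Ω → ι}
    (hZ : ∑ i, pr μ {ω | Z ω = i} = 1) (t : Set Ω) :
    pr μ t = ∑ i, pr μ (t ∩ {ω | Z ω = i}) := by
  have hZ' : ∑ i, μ (Z ⁻¹' {i}) = μ Set.univ := by
    rw [measure_univ, ← ENNReal.toReal_eq_one_iff, ENNReal.toReal_sum fun i _ => by finiteness]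
    exact hZ
  simp only [pr]
  rw [measure_eq_sum_measure_inter_fiber hZ' t, ENNReal.toReal_sum fun i _ => by finiteness]
  rfl

end TotalProbability

lemma pr_nonneg {Ω : Type*} [MeasurableSpace Ω] (μ : Measure Ω) (s : Set Ω) : 0 ≤ pr μ s :=
  ENNReal.toReal_nonneg

section MarkovChain

variable {Ω A B C : Type*} [MeasurableSpace Ω] {μ : Measure Ω} [IsProbabilityMeasure μ]

lemma mutualInfo_eq_sum_klDivUnif [Fintype A] [Fintype B] [Nonempty A]
    {U : Ω → A} {W : Ω → B}
    (hU : ∀ a, pr μ {ω | U ω = a} = (Fintype.card A : ℝ)⁻¹) :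
    mutualInfo μ U W = ∑ b, klDivUnif (fun a => pr μ {ω | U ω = a ∧ W ω = b}) := by
  have hU₁ : ∑ a, pr μ {ω | U ω = a} = 1 := by simp [hU]
  have hW : ∀ b, pr μ {ω | W ω = b} = ∑ a, pr μ {ω | U ω = a ∧ W ω = b} := fun b =>
    (pr_eq_sum_pr_inter hU₁ _).trans (sum_congr rfl fun a _ => congrArg (pr μ)
      (Set.ext fun ω => and_comm))
  rw [mutualInfo, sum_comm]
  refine sum_congr rfl fun b _ => ?_
  rw [klDivUnif_eq_sum_mul_log fun a => pr_nonneg μ _]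
  simp only [hU, hW]

lemma pr_and_eq_sum_of_markov [Fintype B] {V : Ω → A} {X : Ω → B} {Y : Ω → C}
    (hX : ∑ x, pr μ {ω | X ω = x} = 1) (hX₀ : ∀ x, pr μ {ω | X ω = x} ≠ 0)
    (hmarkov : ∀ v x y, pr μ {ω | V ω = v ∧ X ω = x ∧ Y ω = y} * pr μ {ω | X ω = x} =
      pr μ {ω | V ω = v ∧ X ω = x} * pr μ {ω | X ω = x ∧ Y ω = y}) (v : A) (y : C) :
    pr μ {ω | V ω = v ∧ Y ω = y} =
      ∑ x, pr μ {ω | X ω = x ∧ Y ω = y} *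
        (pr μ {ω | V ω = v ∧ X ω = x} / pr μ {ω | X ω = x}) := by
  rw [pr_eq_sum_pr_inter hX]
  refine sum_congr rfl fun x _ => ?_
  have hset : {ω | V ω = v ∧ Y ω = y} ∩ {ω | X ω = x} =
      {ω | V ω = v ∧ X ω = x ∧ Y ω = y} := by
    ext ω
    exact ⟨fun h => ⟨h.1.1, h.2, h.1.2⟩, fun h => ⟨⟨h.1, h.2.2⟩, h.2.1⟩⟩
  rw [hset, mul_div_assoc', eq_div_iff (hX₀ x), hmarkov, mul_comm]

end MarkovChain

lemma four_mul_sq_le_two_mul_exp_sub_one_sq {δ α : ℝ} (hδ₀ : 0 ≤ δ) (hδ₁ : δ < 1)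
    (hα : α = log ((1 + δ) / (1 - δ))) : 4 * δ ^ 2 ≤ 2 * (exp (2 * α) - 1) ^ 2 := by
  have hr : 1 + δ ≤ (1 + δ) / (1 - δ) := le_div_self (by linarith) (by linarith) (by linarith)
  have hexp : exp (2 * α) = ((1 + δ) / (1 - δ)) ^ 2 := by
    rw [two_mul, exp_add, hα, exp_log (by positivity), sq]
  have h2δ : 2 * δ ≤ exp (2 * α) - 1 := by rw [hexp]; nlinarith
  nlinarith

/-- Quantitative data-processing inequality for the binary symmetric channel: for the
Markov chain `V → X → Y` with `V` uniform on `{-1,1}^d`, `P(X_j = V_j | V) = (1+δ)/2`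
independently across coordinates, and `α = log((1+δ)/(1-δ))`,
`I(V; Y) ≤ 2(e^{2α} - 1)²·I(X; Y)`. -/
theorem stmt10 {Ω 𝒴 : Type*} [MeasurableSpace Ω] [Fintype 𝒴] {d : ℕ}
    (μ : Measure Ω) [IsProbabilityMeasure μ]
    (δ α : ℝ) (hδ0 : 0 ≤ δ) (hδ1 : δ < 1)
    (hα : α = Real.log ((1 + δ) / (1 - δ)))
    (V X : Ω → Fin d → Bool) (Y : Ω → 𝒴)
    (huniform : ∀ v, pr μ {ω | V ω = v} = (1 / 2) ^ d)
    (hchannel : ∀ v x, pr μ {ω | V ω = v ∧ X ω = x} =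
      (1 / 2) ^ d * ∏ j, (if x j = v j then (1 + δ) / 2 else (1 - δ) / 2))
    (hmarkov : ∀ (v x : Fin d → Bool) (y : 𝒴),
      pr μ {ω | V ω = v ∧ X ω = x ∧ Y ω = y} * pr μ {ω | X ω = x} =
        pr μ {ω | V ω = v ∧ X ω = x} * pr μ {ω | X ω = x ∧ Y ω = y}) :
    mutualInfo μ V Y ≤ 2 * (Real.exp (2 * α) - 1) ^ 2 * mutualInfo μ X Y := by
  have hδ : |δ| ≤ 1 := abs_le.2 ⟨by linarith, hδ1.le⟩
  have hpow : ((1 : ℝ) / 2) ^ d ≠ 0 := by positivity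
  have hcard : (Fintype.card (Fin d → Bool) : ℝ)⁻¹ = (1 / 2) ^ d := by simp
  have hVX : ∀ v x, pr μ {ω | V ω = v ∧ X ω = x} = (1 / 2) ^ d * bscPow δ d x v := hchannel
  have hV₁ : ∑ v, pr μ {ω | V ω = v} = 1 := by simp [huniform]
  have hX : ∀ x, pr μ {ω | X ω = x} = (1 / 2) ^ d := fun x => by
    rw [pr_eq_sum_pr_inter hV₁]
    calc ∑ v, pr μ ({ω | X ω = x} ∩ {ω | V ω = v}) = ∑ v, (1 / 2) ^ d * bscPow δ d x v :=
          sum_congr rfl fun v _ => (congrArg (pr μ) (Set.inter_comm _ _)).trans (hVX v x)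
      _ = (1 / 2) ^ d := by
          rw [← mul_sum, sum_row_of_mem_rowStochastic (bscPow_mem_rowStochastic hδ d), mul_one]
  have hX₁ : ∑ x, pr μ {ω | X ω = x} = 1 := by simp [hX]
  have hVY : ∀ y, (fun v => pr μ {ω | V ω = v ∧ Y ω = y}) =
      (fun x => pr μ {ω | X ω = x ∧ Y ω = y}) ᵥ* bscPow δ d := fun y => by
    ext v
    rw [pr_and_eq_sum_of_markov hX₁ (fun x => hX x ▸ hpow) hmarkov]
    simp only [vecMul, dotProduct, hVX, hX, mul_div_cancel_left₀ _ hpow]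
  rw [mutualInfo_eq_sum_klDivUnif (fun v => (huniform v).trans hcard.symm),
    mutualInfo_eq_sum_klDivUnif (fun x => (hX x).trans hcard.symm), mul_sum]
  refine sum_le_sum fun y _ => ?_
  rw [hVY]
  exact contractsKlDivUnif_bscPow hδ (four_mul_sq_le_two_mul_exp_sub_one_sq hδ0 hδ1 hα) d _
    fun x => pr_nonneg μ _
end
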